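/- arXiv:2212.12958 — 2 statements merged into one kernel-verified Lean document; each statement's English description precedes it below -/
import Mathlib

section
/- Let G be a topological group and q : Γ → G a map from a group Γ with q(x⁻¹) = q(x)⁻¹ for all x. If there is a compact set K ⊆ G with q(xy) ∈ K · q(x) · q(y) for all x, y ∈ Γ, then there is a compact set K' ⊆ G with q(xy) ∈ q(x) · q(y) · K' for all x, y ∈ Γ. -/
section SymmetricDefect

variable {Γ G : Type*} [Group Γ] [Group G] {q : Γ → G}

theorem map_mul_eq_inv_map_mul_inv_rev (hsym : ∀ x, q x⁻¹ = (q x)⁻¹) (x y : Γ) :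
    q (x * y) = (q (y⁻¹ * x⁻¹))⁻¹ := by
  rw [← mul_inv_rev, hsym, inv_inv]

/-- Apply the left defect at `(y⁻¹, x⁻¹)` and invert. -/
theorem exists_right_defect_inv_of_left_defect (hsym : ∀ x, q x⁻¹ = (q x)⁻¹) {K : Set G}
    (h : ∀ x y : Γ, ∃ k ∈ K, q (x * y) = k * q x * q y) (x y : Γ) :
    ∃ k ∈ K⁻¹, q (x * y) = q x * q y * k := by
  obtain ⟨k, hk, hkeq⟩ := h y⁻¹ x⁻¹
  refine ⟨k⁻¹, Set.inv_mem_inv.mpr hk, ?_⟩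
  rw [map_mul_eq_inv_map_mul_inv_rev hsym, hkeq, hsym, hsym]
  group

end SymmetricDefect

/-- If `q : Γ → G` is symmetric (`q(x⁻¹) = q(x)⁻¹`) and satisfies
`q(xy) ∈ K · q(x) · q(y)` for a compact `K`, then there is a compact `K'` with
`q(xy) ∈ q(x) · q(y) · K'` for all `x, y`. -/
theorem ulam_left_defect_iff_right_defect {Γ G : Type*} [Group Γ] [Group G]
    [TopologicalSpace G] [IsTopologicalGroup G]
    (q : Γ → G) (hsym : ∀ x, q x⁻¹ = (q x)⁻¹)
    (K : Set G) (hK : IsCompact K)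
    (h : ∀ x y : Γ, ∃ k ∈ K, q (x * y) = k * q x * q y) :
    ∃ K' : Set G, IsCompact K' ∧ ∀ x y : Γ, ∃ k ∈ K', q (x * y) = q x * q y * k :=
  ⟨K⁻¹, hK.inv, exists_right_defect_inv_of_left_defect hsym h⟩
end

section
/- Let W₁, W₂ be nonempty reduced words in the free group F₂ such that W₁ is not a subword of W₂ⁱ for any i ∈ ℤ. Then the homogenization of the Brooks quasimorphism associated with W₁ vanishes on W₂: q₁(W₂) = 0. -/
open Filter

/-- Number of occurrences of `w` as a contiguous subword of `v`. -/
def subwordCount (w v : List (Fin 2 × Bool)) : ℕ :=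
  (List.range (v.length + 1)).countP (fun i => decide (w <+: v.drop i))

/-- The Brooks counting function `h_W(g) = #(W in g) − #(W⁻¹ in g)`. -/
noncomputable def brooks (W : FreeGroup (Fin 2)) (g : FreeGroup (Fin 2)) : ℝ :=
  (subwordCount W.toWord g.toWord : ℝ) - (subwordCount W⁻¹.toWord g.toWord : ℝ)

/-
Counting occurrences of `W₁` and `W₁⁻¹` in `W₂ⁿ` is the same as counting occurrences of `W₁` in
`W₂ⁿ` and in `W₂⁻ⁿ`, since inversion reverses words. Both counts are zero by hypothesis, so the
Brooks function vanishes on every power of `W₂`, and hence so does its homogenization.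
-/

lemma subwordCount_eq_zero_of_not_infix {w v : List (Fin 2 × Bool)} (h : ¬ w <:+: v) :
    subwordCount w v = 0 := by
  refine List.countP_eq_zero.mpr fun i _ hi => h ?_
  exact (of_decide_eq_true hi).isInfix.trans (List.drop_suffix i v).isInfix

lemma FreeGroup.toWord_inv_infix_toWord_inv_iff {α : Type*} [DecidableEq α]
    {u g : FreeGroup α} :
    u⁻¹.toWord <:+: g⁻¹.toWord ↔ u.toWord <:+: g.toWord := by
  have invRev_infix {u g : FreeGroup α} (h : u.toWord <:+: g.toWord) :
      u⁻¹.toWord <:+: g⁻¹.toWord := by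
    simpa only [FreeGroup.toWord_inv, FreeGroup.invRev] using (h.map _).reverse
  exact ⟨fun h => by simpa only [inv_inv] using invRev_infix h, invRev_infix⟩

lemma brooks_eq_zero_of_not_infix {W g : FreeGroup (Fin 2)} (hg : ¬ W.toWord <:+: g.toWord)
    (hg_inv : ¬ W.toWord <:+: g⁻¹.toWord) : brooks W g = 0 := by
  have hW_inv : ¬ W⁻¹.toWord <:+: g.toWord := fun h => hg_inv <| by
    simpa only [inv_inv] using (FreeGroup.toWord_inv_infix_toWord_inv_iff (u := W⁻¹)).mpr h
  simp only [brooks, subwordCount_eq_zero_of_not_infix hg,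
    subwordCount_eq_zero_of_not_infix hW_inv, sub_self]

theorem brooks_homogenization_vanishes_general (W₁ W₂ : FreeGroup (Fin 2))
    (hsub : ∀ i : ℤ, ¬ W₁.toWord <:+: (W₂ ^ i).toWord) :
    Tendsto (fun n : ℕ => brooks W₁ (W₂ ^ n) / n) atTop (nhds 0) := by
  have hpow : ∀ n : ℕ, brooks W₁ (W₂ ^ n) = 0 := fun n =>
    brooks_eq_zero_of_not_infix (by simpa only [zpow_natCast] using hsub n)
      (by simpa only [zpow_neg, zpow_natCast] using hsub (-n))
  simpa only [hpow, zero_div] using tendsto_const_nhds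

/-- If `W₁` is not a subword of any power `W₂ⁱ` (`i ∈ ℤ`), then the homogenization of
the Brooks quasimorphism of `W₁` vanishes on `W₂`. -/
theorem brooks_homogenization_vanishes (W₁ W₂ : FreeGroup (Fin 2))
    (hW₁ : W₁ ≠ 1) (hW₂ : W₂ ≠ 1)
    (hsub : ∀ i : ℤ, ¬ W₁.toWord <:+: (W₂ ^ i).toWord) :
    Tendsto (fun n : ℕ => brooks W₁ (W₂ ^ n) / n) atTop (nhds 0) :=
  brooks_homogenization_vanishes_general W₁ W₂ hsub
end
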